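/- (Triangle inequality for angles) Let [p x¹], [p x²], [p x³] be three geodesics in a metric space issuing from a common point p. If all three angles α^{ij} = ∠(x^i p x^j) between the corresponding pairs of geodesics are defined (as limits of Euclidean model angles), then α¹³ ≤ α¹² + α²³. -/

import Mathlib

open Set Filter Topology

/-- The Euclidean comparison angle for side lengths `a`, `b` adjacent to the vertex and
opposite side `c`. -/
noncomputable def modAngle (a b c : ℝ) : ℝ :=
  Real.arccos ((a ^ 2 + b ^ 2 - c ^ 2) / (2 * a * b))

/-- `γ` is a unit-speed geodesic on `[0, L]` starting at `p`. -/
def IsGeodesicFrom {X : Type*} [MetricSpace X] (γ : ℝ → X) (p : X) (L : ℝ) : Prop :=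
  γ 0 = p ∧ ∀ s ∈ Icc (0:ℝ) L, ∀ t ∈ Icc (0:ℝ) L, dist (γ s) (γ t) = |s - t|

private lemma arccos_anti : Antitone Real.arccos := fun x y h => by
  rw [Real.arccos, Real.arccos]
  linarith [Real.monotone_arcsin h]

/-- The Euclidean chord length subtending angle `θ` with sides `a`, `b`. -/
noncomputable def chordf (a b θ : ℝ) : ℝ := Real.sqrt (a^2 + b^2 - 2*a*b*Real.cos θ)

private lemma chord_arg_nonneg (a b θ : ℝ) (ha : 0 ≤ a) (hb : 0 ≤ b) :
    0 ≤ a^2 + b^2 - 2*a*b*Real.cos θ := by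
  nlinarith [Real.cos_le_one θ, sq_nonneg (a - b), mul_nonneg ha hb]

private lemma chord_sq (a b θ : ℝ) (ha : 0 ≤ a) (hb : 0 ≤ b) :
    chordf a b θ ^ 2 = a^2 + b^2 - 2*a*b*Real.cos θ :=
  Real.sq_sqrt (chord_arg_nonneg a b θ ha hb)

private lemma chord_nonneg (a b θ : ℝ) : 0 ≤ chordf a b θ := Real.sqrt_nonneg _

private lemma modAngle_chordf {a b θ : ℝ} (ha : 0 < a) (hb : 0 < b) (hθ0 : 0 ≤ θ)
    (hθπ : θ ≤ Real.pi) : modAngle a b (chordf a b θ) = θ := by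
  unfold modAngle
  rw [chord_sq a b θ ha.le hb.le]
  have h : (a^2 + b^2 - (a^2 + b^2 - 2*a*b*Real.cos θ)) / (2*a*b) = Real.cos θ := by
    field_simp
    ring
  rw [h, Real.arccos_cos hθ0 hθπ]

private lemma lt_chordf {a b c θ : ℝ} (ha : 0 < a) (hb : 0 < b) (hc : 0 ≤ c)
    (hθπ : θ ≤ Real.pi) (h : modAngle a b c < θ) : c < chordf a b θ := by
  by_contra hcon
  push_neg at hcon
  have hθ0 : 0 ≤ θ := le_of_lt (lt_of_le_of_lt (Real.arccos_nonneg _) h)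
  have hsq : a^2 + b^2 - 2*a*b*Real.cos θ ≤ c^2 := by
    have := chord_sq a b θ ha.le hb.le
    nlinarith [chord_nonneg a b θ]
  have hdiv : (a^2 + b^2 - c^2) / (2*a*b) ≤ Real.cos θ := by
    rw [div_le_iff₀ (by positivity)]
    nlinarith
  have := arccos_anti hdiv
  rw [Real.arccos_cos hθ0 hθπ] at this
  exact absurd h (not_lt.2 this)

private lemma modAngle_le_of_le_chordf {a b c θ : ℝ} (ha : 0 < a) (hb : 0 < b) (hc : 0 ≤ c)
    (hθ0 : 0 ≤ θ) (hθπ : θ ≤ Real.pi) (h : c ≤ chordf a b θ) : modAngle a b c ≤ θ := by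
  have hsq : c^2 ≤ a^2 + b^2 - 2*a*b*Real.cos θ := by
    have := chord_sq a b θ ha.le hb.le
    nlinarith [chord_nonneg a b θ]
  have hdiv : Real.cos θ ≤ (a^2 + b^2 - c^2) / (2*a*b) := by
    rw [le_div_iff₀ (by positivity)]
    nlinarith
  have := arccos_anti hdiv
  rwa [Real.arccos_cos hθ0 hθπ] at this

set_option maxHeartbeats 2000000 in
/-- Key planar lemma: an angle `θ₁ + θ₂ < π` at the origin with sides `s`, `t` can be split
by a point at distance `r ≤ max s t` from the origin, so that the chords add up. -/
private lemma chord_split (s t θ₁ θ₂ : ℝ) (hs : 0 < s) (ht : 0 < t) (h1 : 0 < θ₁)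
    (h2 : 0 < θ₂) (hβ : θ₁ + θ₂ < Real.pi) :
    ∃ r, 0 < r ∧ r ≤ max s t ∧ chordf s r θ₁ + chordf r t θ₂ = chordf s t (θ₁ + θ₂) := by
  have h1π : θ₁ < Real.pi := by linarith
  have h2π : θ₂ < Real.pi := by linarith
  set a := Real.sin θ₁ with ha_def
  set b := Real.cos θ₁ with hb_def
  set c := Real.sin θ₂ with hc_def
  set d := Real.cos θ₂ with hd_def
  have ha : 0 < a := Real.sin_pos_of_pos_of_lt_pi h1 h1π
  have hc : 0 < c := Real.sin_pos_of_pos_of_lt_pi h2 h2π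
  have hb1 : b ≤ 1 := Real.cos_le_one θ₁
  have hd1 : d ≤ 1 := Real.cos_le_one θ₂
  have hab : a^2 + b^2 = 1 := Real.sin_sq_add_cos_sq θ₁
  have hcd : c^2 + d^2 = 1 := Real.sin_sq_add_cos_sq θ₂
  set D := s * a + t * c with hD_def
  have hD : 0 < D := by positivity
  have hsinβ : Real.sin (θ₁ + θ₂) = a * d + b * c := Real.sin_add θ₁ θ₂
  have hcosβ : Real.cos (θ₁ + θ₂) = b * d - a * c := Real.cos_add θ₁ θ₂
  set r := s * t * (a * d + b * c) / D with hr_def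
  have hsinβpos : 0 < a * d + b * c := by
    rw [← hsinβ]; exact Real.sin_pos_of_pos_of_lt_pi (by linarith) hβ
  have hr : 0 < r := by positivity
  have hrD : r * D = s * t * (a * d + b * c) := by
    rw [hr_def]; field_simp
  refine ⟨r, hr, ?_, ?_⟩
  · -- r ≤ max s t
    rw [div_le_iff₀ hD]
    have hst : s ≤ max s t := le_max_left s t
    have hts : t ≤ max s t := le_max_right s t
    have htd : t * d ≤ max s t := le_trans (by nlinarith) hts
    have hsb : s * b ≤ max s t := le_trans (by nlinarith) hst
    have h1' : s * a * (t * d) ≤ s * a * max s t :=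
      mul_le_mul_of_nonneg_left htd (by positivity)
    have h2' : t * c * (s * b) ≤ t * c * max s t :=
      mul_le_mul_of_nonneg_left hsb (by positivity)
    rw [hD_def]
    nlinarith [h1', h2']
  · -- the chord identity
    set B := s^2 + t^2 - 2*s*t*Real.cos (θ₁ + θ₂) with hB_def
    have hB : 0 ≤ B := chord_arg_nonneg s t _ hs.le ht.le
    have key1 : (s^2 + r^2 - 2*s*r*b) * D^2 = (s*a)^2 * B := by
      rw [hB_def, hcosβ, hD_def]
      have hrD' : r * (s * a + t * c) = s * t * (a * d + b * c) := by
        rw [← hD_def]; exact hrD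
      linear_combination (r*(s*a+t*c) + s*t*(a*d+b*c) - 2*s*b*(s*a+t*c)) * hrD' +
        (s^2*t^2*a^2) * hcd + (-2*s^3*t*a*c - s^2*t^2*c^2) * hab
    have key2 : (r^2 + t^2 - 2*r*t*d) * D^2 = (t*c)^2 * B := by
      rw [hB_def, hcosβ, hD_def]
      have hrD' : r * (s * a + t * c) = s * t * (a * d + b * c) := by
        rw [← hD_def]; exact hrD
      linear_combination (r*(s*a+t*c) + s*t*(a*d+b*c) - 2*t*d*(s*a+t*c)) * hrD' +
        (s^2*t^2*c^2) * hab + (-2*s*t^3*a*c - s^2*t^2*a^2) * hcd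
    have e1 : chordf s r θ₁ = (s*a/D) * Real.sqrt B := by
      have harg : s^2 + r^2 - 2*s*r*Real.cos θ₁ = (s*a/D)^2 * B := by
        rw [← hb_def]
        have hD2 : (0:ℝ) < D^2 := by positivity
        field_simp
        linear_combination key1
      rw [chordf, harg, Real.sqrt_mul (sq_nonneg _), Real.sqrt_sq (by positivity)]
    have e2 : chordf r t θ₂ = (t*c/D) * Real.sqrt B := by
      have harg : r^2 + t^2 - 2*r*t*Real.cos θ₂ = (t*c/D)^2 * B := by
        rw [← hd_def]
        have hD2 : (0:ℝ) < D^2 := by positivity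
        field_simp
        linear_combination key2
      rw [chordf, harg, Real.sqrt_mul (sq_nonneg _), Real.sqrt_sq (by positivity)]
    rw [e1, e2, chordf, ← hB_def]
    field_simp
    ring

/-- Extract a uniform smallness bound from a product-filter limit. -/
private lemma extract_lt {f : ℝ × ℝ → ℝ} {l θ : ℝ}
    (h : Tendsto f ((𝓝[>] (0:ℝ)) ×ˢ (𝓝[>] (0:ℝ))) (𝓝 l)) (hlθ : l < θ) :
    ∃ δ > 0, ∀ x y : ℝ, 0 < x → x < δ → 0 < y → y < δ → f (x, y) < θ := by
  have hev := h.eventually_lt_const hlθ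
  rw [eventually_prod_iff] at hev
  obtain ⟨pa, hpa, pb, hpb, hpab⟩ := hev
  rw [(nhdsGT_basis (0:ℝ)).eventually_iff] at hpa hpb
  obtain ⟨δ₁, hδ₁, h1⟩ := hpa
  obtain ⟨δ₂, hδ₂, h2⟩ := hpb
  refine ⟨min δ₁ δ₂, lt_min hδ₁ hδ₂, fun x y hx hxδ hy hyδ => ?_⟩
  exact hpab (h1 ⟨hx, lt_of_lt_of_le hxδ (min_le_left _ _)⟩)
    (h2 ⟨hy, lt_of_lt_of_le hyδ (min_le_right _ _)⟩)

/-- Triangle inequality for angles: if the angles between three geodesics issuing from a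
common point `p` are all defined (as limits of Euclidean comparison angles), then
`α¹³ ≤ α¹² + α²³`. -/
theorem stmt_7 {X : Type*} [MetricSpace X] (p : X)
    (γ₁ γ₂ γ₃ : ℝ → X) (L₁ L₂ L₃ : ℝ)
    (hL₁ : 0 < L₁) (hL₂ : 0 < L₂) (hL₃ : 0 < L₃)
    (hγ₁ : IsGeodesicFrom γ₁ p L₁) (hγ₂ : IsGeodesicFrom γ₂ p L₂)
    (hγ₃ : IsGeodesicFrom γ₃ p L₃)
    (α₁₂ α₁₃ α₂₃ : ℝ)
    (h₁₂ : Tendsto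
      (fun st : ℝ × ℝ =>
        modAngle (dist p (γ₁ st.1)) (dist p (γ₂ st.2)) (dist (γ₁ st.1) (γ₂ st.2)))
      ((𝓝[>] (0:ℝ)) ×ˢ (𝓝[>] (0:ℝ))) (𝓝 α₁₂))
    (h₂₃ : Tendsto
      (fun st : ℝ × ℝ =>
        modAngle (dist p (γ₂ st.1)) (dist p (γ₃ st.2)) (dist (γ₂ st.1) (γ₃ st.2)))
      ((𝓝[>] (0:ℝ)) ×ˢ (𝓝[>] (0:ℝ))) (𝓝 α₂₃))
    (h₁₃ : Tendsto
      (fun st : ℝ × ℝ =>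
        modAngle (dist p (γ₁ st.1)) (dist p (γ₃ st.2)) (dist (γ₁ st.1) (γ₃ st.2)))
      ((𝓝[>] (0:ℝ)) ×ˢ (𝓝[>] (0:ℝ))) (𝓝 α₁₃)) :
    α₁₃ ≤ α₁₂ + α₂₃ := by
  by_contra hcon
  push_neg at hcon
  -- basic facts about geodesic distances
  have hd : ∀ (γ : ℝ → X) (L : ℝ), 0 < L → IsGeodesicFrom γ p L →
      ∀ s : ℝ, 0 ≤ s → s ≤ L → dist p (γ s) = s := by
    intro γ L hL hγ s h0 hsL
    rw [← hγ.1, hγ.2 0 ⟨le_rfl, hL.le⟩ s ⟨h0, hsL⟩]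
    rw [zero_sub, abs_neg, abs_of_nonneg h0]
  -- NeBot instance
  haveI : ((𝓝[>] (0:ℝ)) ×ˢ (𝓝[>] (0:ℝ))).NeBot := by infer_instance
  have hα₁₂0 : 0 ≤ α₁₂ := ge_of_tendsto' h₁₂ fun x => Real.arccos_nonneg _
  have hα₂₃0 : 0 ≤ α₂₃ := ge_of_tendsto' h₂₃ fun x => Real.arccos_nonneg _
  have hα₁₃π : α₁₃ ≤ Real.pi := le_of_tendsto' h₁₃ fun x => Real.arccos_le_pi _
  set ε := (α₁₃ - (α₁₂ + α₂₃)) / 3 with hε_def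
  have hε : 0 < ε := by simp only [hε_def]; linarith
  set θ₁ := α₁₂ + ε with hθ₁_def
  set θ₂ := α₂₃ + ε with hθ₂_def
  have hθ₁ : 0 < θ₁ := by linarith
  have hθ₂ : 0 < θ₂ := by linarith
  have hβπ : θ₁ + θ₂ < Real.pi := by
    have : θ₁ + θ₂ = α₁₃ - ε := by simp only [hθ₁_def, hθ₂_def, hε_def]; ring
    linarith
  have hβlt : θ₁ + θ₂ < α₁₃ := by
    have : θ₁ + θ₂ = α₁₃ - ε := by simp only [hθ₁_def, hθ₂_def, hε_def]; ring
    linarith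
  -- uniform bounds for the two small angles
  obtain ⟨δ₁₂, hδ₁₂, H₁₂⟩ := extract_lt h₁₂ (show α₁₂ < θ₁ by linarith)
  obtain ⟨δ₂₃, hδ₂₃, H₂₃⟩ := extract_lt h₂₃ (show α₂₃ < θ₂ by linarith)
  set δ := min (min δ₁₂ δ₂₃) (min L₁ (min L₂ L₃)) with hδ_def
  have hδ : 0 < δ := lt_min (lt_min hδ₁₂ hδ₂₃) (lt_min hL₁ (lt_min hL₂ hL₃))
  -- find s, t small where the comparison angle for 1-3 exceeds θ₁ + θ₂
  have hfreq := (h₁₃.eventually_const_lt hβlt).and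
    (eventually_of_mem (prod_mem_prod (Ioo_mem_nhdsGT hδ) (Ioo_mem_nhdsGT hδ))
      (fun x hx => hx))
  obtain ⟨⟨s, t⟩, hbig, ⟨hs0, hsδ⟩, ht0, htδ⟩ := hfreq.exists
  simp only at hbig hs0 hsδ ht0 htδ
  -- the splitting radius
  obtain ⟨r, hr0, hrmax, hchord⟩ := chord_split s t θ₁ θ₂ hs0 ht0 hθ₁ hθ₂ hβπ
  have hrδ : r < δ := lt_of_le_of_lt hrmax (max_lt hsδ htδ)
  -- geodesic distances
  have hδL₁ : δ ≤ L₁ := le_trans (min_le_right _ _) (min_le_left _ _)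
  have hδL₂ : δ ≤ L₂ := le_trans (min_le_right _ _) (le_trans (min_le_right _ _) (min_le_left _ _))
  have hδL₃ : δ ≤ L₃ := le_trans (min_le_right _ _) (le_trans (min_le_right _ _) (min_le_right _ _))
  have hδ₁₂' : δ ≤ δ₁₂ := le_trans (min_le_left _ _) (min_le_left _ _)
  have hδ₂₃' : δ ≤ δ₂₃ := le_trans (min_le_left _ _) (min_le_right _ _)
  have hds : dist p (γ₁ s) = s := hd γ₁ L₁ hL₁ hγ₁ s hs0.le (le_trans hsδ.le hδL₁)
  have hdr : dist p (γ₂ r) = r := hd γ₂ L₂ hL₂ hγ₂ r hr0.le (le_trans hrδ.le hδL₂)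
  have hdt : dist p (γ₃ t) = t := hd γ₃ L₃ hL₃ hγ₃ t ht0.le (le_trans htδ.le hδL₃)
  -- comparison angle bounds give chord bounds
  have h1 : modAngle s r (dist (γ₁ s) (γ₂ r)) < θ₁ := by
    have := H₁₂ s r hs0 (lt_of_lt_of_le hsδ hδ₁₂') hr0 (lt_of_lt_of_le hrδ hδ₁₂')
    rwa [hds, hdr] at this
  have h2 : modAngle r t (dist (γ₂ r) (γ₃ t)) < θ₂ := by
    have := H₂₃ r t hr0 (lt_of_lt_of_le hrδ hδ₂₃') ht0 (lt_of_lt_of_le htδ hδ₂₃')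
    rwa [hdr, hdt] at this
  have hc1 : dist (γ₁ s) (γ₂ r) < chordf s r θ₁ :=
    lt_chordf hs0 hr0 dist_nonneg (by linarith) h1
  have hc2 : dist (γ₂ r) (γ₃ t) < chordf r t θ₂ :=
    lt_chordf hr0 ht0 dist_nonneg (by linarith) h2
  have hc3 : dist (γ₁ s) (γ₃ t) ≤ chordf s t (θ₁ + θ₂) := by
    calc dist (γ₁ s) (γ₃ t) ≤ dist (γ₁ s) (γ₂ r) + dist (γ₂ r) (γ₃ t) := dist_triangle _ _ _
    _ ≤ chordf s r θ₁ + chordf r t θ₂ := by linarith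
    _ = chordf s t (θ₁ + θ₂) := hchord
  have hfinal : modAngle s t (dist (γ₁ s) (γ₃ t)) ≤ θ₁ + θ₂ :=
    modAngle_le_of_le_chordf hs0 ht0 dist_nonneg (by linarith) hβπ.le hc3
  rw [hds, hdt] at hbig
  linarith
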